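/- Let ν be a finite Borel measure on ℝ with finite moments, let B be positive real, and suppose μ is a finite Borel measure on ℝ whose Hankel moment matrices satisfy M_d(μ) ⪯ M_d(ν) for all d. If the moment sequences of μ and ν are determinate and moments of ν are finite, then μ(A) ≤ ν(A) for every Borel set A ⊆ ℝ with both measures compactly supported. -/

import Mathlib

open MeasureTheory

/-- Hankel moment matrix of a measure on ℝ. -/
noncomputable def momentMatrix (μ : Measure ℝ) (d : ℕ) :
    Matrix (Fin (d + 1)) (Fin (d + 1)) ℝ :=
  fun k l => ∫ x, x ^ ((k : ℕ) + (l : ℕ)) ∂μ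

open Polynomial Set Matrix
open scoped NNReal BoundedContinuousFunction

/-! Testing the Loewner inequality `M_d(μ) ⪯ M_d(ν)` against the coefficient vector of a
polynomial `p` gives `∫ p² dμ ≤ ∫ p² dν`. On an interval carrying both measures, every continuous
`f ≥ 0` is a uniform limit of squares of polynomials (Weierstrass applied to `√f`), hence
`∫ f dμ ≤ ∫ f dν`. Approximating indicators of closed sets from above by such `f` and using inner
regularity by closed sets yields `μ A ≤ ν A`. -/

section Regularity

variable {X : Type*} [MeasurableSpace X] [TopologicalSpace X] [HasOuterApproxClosed X]
  [OpensMeasurableSpace X] {μ ν : Measure X} [IsFiniteMeasure μ] [IsFiniteMeasure ν]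

theorem measure_isClosed_le_of_forall_lintegral_le
    (h : ∀ f : X →ᵇ ℝ≥0, ∫⁻ x, f x ∂μ ≤ ∫⁻ x, f x ∂ν) {F : Set X} (hF : IsClosed F) :
    μ F ≤ ν F :=
  le_of_tendsto_of_tendsto' (HasOuterApproxClosed.tendsto_lintegral_apprSeq hF μ)
    (HasOuterApproxClosed.tendsto_lintegral_apprSeq hF ν) fun _ => h _

theorem Measure.le_of_forall_lintegral_le [μ.WeaklyRegular]
    (h : ∀ f : X →ᵇ ℝ≥0, ∫⁻ x, f x ∂μ ≤ ∫⁻ x, f x ∂ν) : μ ≤ ν := by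
  refine Measure.le_iff.2 fun A hA => ?_
  rw [hA.measure_eq_iSup_isClosed_of_ne_top (measure_ne_top μ A)]
  exact iSup₂_le fun F hFA => iSup_le fun hF =>
    (measure_isClosed_le_of_forall_lintegral_le h hF).trans (measure_mono hFA)

end Regularity

theorem integral_le_integral_add_mul_of_ae_le {X : Type*} [MeasurableSpace X] {μ : Measure X}
    [IsFiniteMeasure μ] {f g : X → ℝ} (hf : Integrable f μ) (hg : Integrable g μ) {ε : ℝ}
    (h : ∀ᵐ x ∂μ, f x ≤ g x + ε) : ∫ x, f x ∂μ ≤ ∫ x, g x ∂μ + ε * μ.real univ := by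
  calc ∫ x, f x ∂μ ≤ ∫ x, (g x + ε) ∂μ := integral_mono_ae hf (hg.add (integrable_const ε)) h
    _ = ∫ x, g x ∂μ + ε * μ.real univ := by
      rw [integral_add hg (integrable_const ε), integral_const, smul_eq_mul, mul_comm]

theorem Continuous.integrable_of_measure_compl_Icc_eq_zero {μ : Measure ℝ} [IsFiniteMeasure μ]
    {a b : ℝ} (hμ : μ (Icc a b)ᶜ = 0) {f : ℝ → ℝ} (hf : Continuous f) : Integrable f μ := by
  rw [← Measure.restrict_eq_self_of_ae_mem (mem_ae_iff.2 hμ)]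
  exact hf.continuousOn.integrableOn_Icc

theorem exists_polynomial_sq_near_of_continuousOn {a b : ℝ} {f : ℝ → ℝ}
    (hf : ContinuousOn f (Icc a b)) (hf0 : ∀ x ∈ Icc a b, 0 ≤ f x) {ε : ℝ} (hε : 0 < ε) :
    ∃ p : ℝ[X], ∀ x ∈ Icc a b, |p.eval x ^ 2 - f x| ≤ ε := by
  obtain ⟨M, hM⟩ := isCompact_Icc.exists_bound_of_continuousOn hf.sqrt
  set η := min 1 (ε / (1 + 2 * |M|))
  obtain ⟨p, hp⟩ := exists_polynomial_near_of_continuousOn a b _ hf.sqrt η (by positivity)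
  refine ⟨p, fun x hx => ?_⟩
  have hpx : |p.eval x - √(f x)| ≤ η := (hp x hx).le
  have hgx : |2 * √(f x)| ≤ 2 * |M| := by
    rw [abs_mul, abs_two]
    exact mul_le_mul_of_nonneg_left ((hM x hx).trans (le_abs_self M)) zero_le_two
  have hsq : √(f x) ^ 2 = f x := Real.sq_sqrt (hf0 x hx)
  calc |p.eval x ^ 2 - f x| = |p.eval x - √(f x)| * |p.eval x - √(f x) + 2 * √(f x)| := by
        rw [← abs_mul]; congr 1; linear_combination hsq
    _ ≤ η * (η + 2 * |M|) := by gcongr; exact (abs_add_le _ _).trans (add_le_add hpx hgx)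
    _ ≤ ε / (1 + 2 * |M|) * (1 + 2 * |M|) := by
        gcongr
        · exact min_le_right _ _
        · exact min_le_left _ _
    _ = ε := div_mul_cancel₀ _ (by positivity)

theorem integral_eval_sq_eq_dotProduct_momentMatrix {μ : Measure ℝ}
    (hmom : ∀ j : ℕ, Integrable (fun x : ℝ => x ^ j) μ) (p : ℝ[X]) {d : ℕ} (hd : p.natDegree ≤ d) :
    ∫ x, p.eval x ^ 2 ∂μ =
      (fun k : Fin (d + 1) => p.coeff k) ⬝ᵥ (momentMatrix μ d *ᵥ fun k => p.coeff k) := by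
  have hexp : ∀ x, p.eval x ^ 2 = ∑ k : Fin (d + 1), ∑ l : Fin (d + 1),
      p.coeff k * (p.coeff l * x ^ ((k : ℕ) + l)) := by
    intro x
    rw [sq, eval_eq_sum_range' (Nat.lt_succ_of_le hd), ← Fin.sum_univ_eq_sum_range,
      Finset.sum_mul_sum]
    simp only [pow_add]
    refine Finset.sum_congr rfl fun k _ => Finset.sum_congr rfl fun l _ => by ring
  have hint : ∀ k l : Fin (d + 1),
      Integrable (fun x : ℝ => p.coeff k * (p.coeff l * x ^ ((k : ℕ) + l))) μ :=
    fun k l => ((hmom _).const_mul _).const_mul _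
  simp only [hexp, dotProduct, mulVec, momentMatrix]
  rw [integral_finsetSum Finset.univ fun k _ =>
    integrable_finsetSum Finset.univ fun l _ => hint k l]
  refine Finset.sum_congr rfl fun k _ => ?_
  rw [integral_finsetSum _ fun l _ => hint k l, Finset.mul_sum]
  refine Finset.sum_congr rfl fun l _ => ?_
  rw [integral_const_mul, integral_const_mul]
  ring

theorem integral_eval_sq_le_of_posSemidef {μ ν : Measure ℝ}
    (hμ : ∀ j : ℕ, Integrable (fun x : ℝ => x ^ j) μ)
    (hν : ∀ j : ℕ, Integrable (fun x : ℝ => x ^ j) ν) {d : ℕ}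
    (h : (momentMatrix ν d - momentMatrix μ d).PosSemidef) {p : ℝ[X]} (hd : p.natDegree ≤ d) :
    ∫ x, p.eval x ^ 2 ∂μ ≤ ∫ x, p.eval x ^ 2 ∂ν := by
  have := h.dotProduct_mulVec_nonneg fun k => p.coeff k
  rw [sub_mulVec, dotProduct_sub, star_trivial] at this
  rw [integral_eval_sq_eq_dotProduct_momentMatrix hμ p hd,
    integral_eval_sq_eq_dotProduct_momentMatrix hν p hd]
  linarith

theorem integral_le_of_forall_integral_eval_sq_le {μ ν : Measure ℝ} [IsFiniteMeasure μ]
    [IsFiniteMeasure ν] {a b : ℝ} (hμ : μ (Icc a b)ᶜ = 0) (hν : ν (Icc a b)ᶜ = 0)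
    (h : ∀ p : ℝ[X], ∫ x, p.eval x ^ 2 ∂μ ≤ ∫ x, p.eval x ^ 2 ∂ν) {f : ℝ → ℝ}
    (hf : Continuous f) (hf0 : ∀ x, 0 ≤ f x) : ∫ x, f x ∂μ ≤ ∫ x, f x ∂ν := by
  refine le_of_forall_pos_le_add fun η hη => ?_
  set ε := η / (μ.real univ + ν.real univ + 1)
  obtain ⟨p, hp⟩ := exists_polynomial_sq_near_of_continuousOn (a := a) (b := b)
    hf.continuousOn (fun x _ => hf0 x) (by positivity : 0 < ε)
  have hp2 : Continuous fun x => p.eval x ^ 2 := by fun_prop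
  have haeμ : ∀ᵐ x ∂μ, x ∈ Icc a b := mem_ae_iff.2 hμ
  have haeν : ∀ᵐ x ∂ν, x ∈ Icc a b := mem_ae_iff.2 hν
  calc ∫ x, f x ∂μ ≤ ∫ x, p.eval x ^ 2 ∂μ + ε * μ.real univ :=
        integral_le_integral_add_mul_of_ae_le (hf.integrable_of_measure_compl_Icc_eq_zero hμ)
          (hp2.integrable_of_measure_compl_Icc_eq_zero hμ)
          (haeμ.mono fun x hx => by linarith [abs_le.1 (hp x hx)])
    _ ≤ ∫ x, p.eval x ^ 2 ∂ν + ε * μ.real univ := by linarith [h p]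
    _ ≤ ∫ x, f x ∂ν + ε * ν.real univ + ε * μ.real univ := by
        linarith [integral_le_integral_add_mul_of_ae_le (ε := ε)
          (hp2.integrable_of_measure_compl_Icc_eq_zero hν)
          (hf.integrable_of_measure_compl_Icc_eq_zero hν)
          (haeν.mono fun x hx => by linarith [abs_le.1 (hp x hx)])]
    _ ≤ ∫ x, f x ∂ν + η := by
        have hεη : ε * (μ.real univ + ν.real univ + 1) = η := div_mul_cancel₀ η (by positivity)
        have hε : 0 < ε := by positivity
        linarith

theorem setwise_le_of_hankel_loewner_general
    (μ ν : Measure ℝ) [IsFiniteMeasure μ] [IsFiniteMeasure ν]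
    (hμmom : ∀ j : ℕ, Integrable (fun x : ℝ => x ^ j) μ)
    (hνmom : ∀ j : ℕ, Integrable (fun x : ℝ => x ^ j) ν)
    (hμsupp : ∃ R : ℝ, μ (Set.Icc (-R) R)ᶜ = 0)
    (hνsupp : ∃ R : ℝ, ν (Set.Icc (-R) R)ᶜ = 0)
    (hloewner : ∀ d : ℕ, (momentMatrix ν d - momentMatrix μ d).PosSemidef) :
    ∀ A : Set ℝ, MeasurableSet A → μ A ≤ ν A := by
  obtain ⟨R₁, hR₁⟩ := hμsupp
  obtain ⟨R₂, hR₂⟩ := hνsupp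
  have hμR : μ (Icc (-max R₁ R₂) (max R₁ R₂))ᶜ = 0 := measure_mono_null
    (compl_subset_compl.2 (Icc_subset_Icc (neg_le_neg (le_max_left _ _)) (le_max_left _ _))) hR₁
  have hνR : ν (Icc (-max R₁ R₂) (max R₁ R₂))ᶜ = 0 := measure_mono_null
    (compl_subset_compl.2 (Icc_subset_Icc (neg_le_neg (le_max_right _ _)) (le_max_right _ _))) hR₂
  refine Measure.le_iff.1 (Measure.le_of_forall_lintegral_le fun f => ?_)
  have hf : Continuous fun x => (f x : ℝ) := by fun_prop
  rw [lintegral_coe_eq_integral _ (hf.integrable_of_measure_compl_Icc_eq_zero hμR),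
    lintegral_coe_eq_integral _ (hf.integrable_of_measure_compl_Icc_eq_zero hνR)]
  refine ENNReal.ofReal_le_ofReal (integral_le_of_forall_integral_eval_sq_le hμR hνR ?_ hf
    fun x => (f x).2)
  exact fun p => integral_eval_sq_le_of_posSemidef hμmom hνmom (hloewner _) le_rfl

theorem setwise_le_of_hankel_loewner
    (μ ν : Measure ℝ) [IsFiniteMeasure μ] [IsFiniteMeasure ν]
    (hμmom : ∀ j : ℕ, Integrable (fun x : ℝ => x ^ j) μ)
    (hνmom : ∀ j : ℕ, Integrable (fun x : ℝ => x ^ j) ν)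
    (hμsupp : ∃ R : ℝ, μ (Set.Icc (-R) R)ᶜ = 0)
    (hνsupp : ∃ R : ℝ, ν (Set.Icc (-R) R)ᶜ = 0)
    (hdetμ : ∀ ρ : Measure ℝ, IsFiniteMeasure ρ →
      (∀ j : ℕ, ∫ x, x ^ j ∂ρ = ∫ x, x ^ j ∂μ) → ρ = μ)
    (hdetν : ∀ ρ : Measure ℝ, IsFiniteMeasure ρ →
      (∀ j : ℕ, ∫ x, x ^ j ∂ρ = ∫ x, x ^ j ∂ν) → ρ = ν)
    (hloewner : ∀ d : ℕ, (momentMatrix ν d - momentMatrix μ d).PosSemidef) :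
    ∀ A : Set ℝ, MeasurableSet A → μ A ≤ ν A :=
  setwise_le_of_hankel_loewner_general μ ν hμmom hνmom hμsupp hνsupp hloewner
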